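/- arXiv:1111.2121 — 5 statements merged into one kernel-verified Lean document; each statement's English description precedes it below -/
import Mathlib

section
/- For any positive integer ℓ, the number of integers s with 0 ≤ s ≤ ℓ such that s ⪯ 2ℓ+1 (where a ⪯ b means every bit of the binary expansion of a is less than or equal to the corresponding bit of b) is even. -/
open scoped Classical

/-- Bitwise domination: every bit of `a` is ≤ the corresponding bit of `b`. -/
def Pre (a b : ℕ) : Prop := ∀ t, a.testBit t = true → b.testBit t = true

lemma xor_one_of_even (k : ℕ) : (2*k) ^^^ 1 = 2*k+1 := by
  apply Nat.eq_of_testBit_eq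
  intro t
  rw [Nat.testBit_xor]
  cases t with
  | zero => simp [Nat.testBit_zero]
  | succ n =>
    have h1 : (2*k)/2 = k := by omega
    have h2 : (2*k+1)/2 = k := by omega
    simp [Nat.testBit_succ, h1, h2]

lemma xor_one_of_odd (k : ℕ) : (2*k+1) ^^^ 1 = 2*k := by
  apply Nat.eq_of_testBit_eq
  intro t
  rw [Nat.testBit_xor]
  cases t with
  | zero => simp [Nat.testBit_zero]
  | succ n =>
    have h1 : (2*k)/2 = k := by omega
    have h2 : (2*k+1)/2 = k := by omega
    simp [Nat.testBit_succ, h1, h2]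

lemma testBit_two_mul_add_one_succ (l t : ℕ) : (2*l+1).testBit (t+1) = l.testBit t := by
  have h2 : (2*l+1)/2 = l := by omega
  simp [Nat.testBit_succ, h2]

/-- If `Pre l (2l+1)` and `l ≠ 0` then `l` is odd. -/
lemma odd_of_pre (l : ℕ) (hl : l ≠ 0) (h : Pre l (2*l+1)) : l.testBit 0 = true := by
  have key : ∀ t, l.testBit t = true → l.testBit 0 = true := by
    intro t
    induction t with
    | zero => exact fun h => h
    | succ n ih =>
      intro ht
      have := h _ ht
      rw [testBit_two_mul_add_one_succ] at this
      exact ih this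
  by_contra hc
  apply hl
  apply Nat.eq_of_testBit_eq
  intro t
  rw [Nat.zero_testBit]
  by_contra ht
  exact hc (key t (by simpa using ht))

theorem stmt0 (l : ℕ) (hl : 1 ≤ l) :
    Even (((Finset.range (l+1)).filter (fun s => Pre s (2*l+1))).card) := by
  set S := (Finset.range (l+1)).filter (fun s => Pre s (2*l+1)) with hS
  have g_mem : ∀ a ∈ S, a ^^^ 1 ∈ S := by
    intro a ha
    rw [hS, Finset.mem_filter, Finset.mem_range] at ha ⊢
    obtain ⟨hlt, hpre⟩ := ha
    have hpre' : Pre (a ^^^ 1) (2*l+1) := by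
      intro t ht
      cases t with
      | zero =>
        have : (2*l+1) % 2 = 1 := by omega
        simp [Nat.testBit_zero, this]
      | succ n =>
        apply hpre
        have h1 : Nat.testBit 1 (n+1) = false := by
          simp [Nat.testBit_succ]
        rw [Nat.testBit_xor, h1, Bool.xor_false] at ht
        exact ht
    refine ⟨?_, hpre'⟩
    rcases Nat.even_or_odd a with ⟨k, hk⟩ | ⟨k, hk⟩
    · -- a = 2k even, a ^^^ 1 = a + 1; need a < l
      have hk2 : a = 2*k := by omega
      have hx : a ^^^ 1 = a + 1 := by rw [hk2]; exact xor_one_of_even k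
      rw [hx]
      rcases Nat.lt_or_ge a l with h | h
      · omega
      · -- a = l; derive contradiction: l would be odd but a even
        have hal : a = l := by omega
        exfalso
        have hodd := odd_of_pre l (by omega) (hal ▸ hpre)
        rw [Nat.testBit_zero] at hodd
        have : l % 2 = 1 := by simpa using hodd
        omega
    · have hx : a ^^^ 1 = a - 1 := by
        rw [hk, xor_one_of_odd k]
        omega
      omega
  have hinv : ∀ a ∈ S, (a ^^^ 1) ^^^ 1 = a := by
    intro a _
    simp [Nat.xor_assoc]
  have hne : ∀ a ∈ S, a ^^^ 1 ≠ a := by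
    intro a _ h
    have h0 := congrArg (fun n => n.testBit 0) h
    simp [Nat.testBit_xor] at h0
    omega
  have hsum : ∑ _x ∈ S, (1 : ZMod 2) = 0 :=
    Finset.sum_involution (fun a _ => a ^^^ 1) (fun a ha => by decide)
      (fun a ha h => hne a ha) g_mem (fun a ha => hinv a ha)
  rw [Finset.sum_const, nsmul_eq_mul, mul_one] at hsum
  have : (2 : ℕ) ∣ S.card := (ZMod.natCast_eq_zero_iff _ 2).mp hsum
  exact even_iff_two_dvd.mpr this
end

section
/- Let f be a symmetric Boolean function on n variables with simplified value vector v_f : {0,…,n} → F₂ (v_f(i) is the value of f on inputs of Hamming weight i) and SANF coefficients λ_f : {0,…,n} → F₂ defined by f = Σ_i λ_f(i) σ_i^n where σ_i^n is the elementary-like homogeneous symmetric function of degree i. Then λ_f(i) = Σ_{j ⪯ i} v_f(j) and v_f(i) = Σ_{j ⪯ i} λ_f(j), where ⪯ is bitwise domination and sums are over F₂. -/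
open scoped Classical

/-- Hamming weight of a Boolean vector. -/
def wtv {n : ℕ} (x : Fin n → ZMod 2) : ℕ := (Finset.univ.filter (fun i => x i = 1)).card

/-- A Boolean function is symmetric if invariant under permutations of inputs. -/
def SymmF {n : ℕ} (f : (Fin n → ZMod 2) → ZMod 2) : Prop :=
  ∀ σ : Equiv.Perm (Fin n), ∀ x, f (x ∘ σ) = f x

/-- The algebraic degree of a Boolean function: the least `d` such that `f` is
represented by a polynomial of total degree at most `d`. -/
noncomputable def funcDeg {n : ℕ} (f : (Fin n → ZMod 2) → ZMod 2) : ℕ :=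
  sInf {d | ∃ P : MvPolynomial (Fin n) (ZMod 2), P.totalDegree ≤ d ∧
    ∀ x, MvPolynomial.eval x P = f x}

/-- Algebraic immunity: the minimal degree of a nonzero annihilator of `f` or `f+1`. -/
noncomputable def AI {n : ℕ} (f : (Fin n → ZMod 2) → ZMod 2) : ℕ :=
  sInf {d | ∃ g : (Fin n → ZMod 2) → ZMod 2, g ≠ 0 ∧ funcDeg g = d ∧
    (f * g = 0 ∨ (f + 1) * g = 0)}

/-- The elementary symmetric Boolean function of degree `i` on `n` variables. -/
def sigmaF (n i : ℕ) : (Fin n → ZMod 2) → ZMod 2 :=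
  fun x => ∑ s ∈ Finset.univ.powersetCard i, ∏ j ∈ s, x j

/-!
By Lucas's theorem, `σ_i^n` takes the value `C(w, i) mod 2 = [i ⪯ w]` on inputs of weight `w`,
which gives the second formula at once. The first follows because the transform
`g ↦ (i ↦ ∑_{j ⪯ i} g j)` is an involution over `F₂`: `∑_j C(i,j) C(j,k) = C(i,k) 2^(i-k)`,
which is odd only for `k = i`.
-/

lemma pre_zero_right_iff {i : ℕ} : Pre i 0 ↔ i = 0 := by
  refine ⟨fun h => Nat.eq_of_testBit_eq fun t => ?_, fun h => h ▸ fun _ ht => ht⟩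
  simpa using mt (h t)

lemma pre_iff_mod_two_and_div_two {i w : ℕ} :
    Pre i w ↔ (i % 2 = 1 → w % 2 = 1) ∧ Pre (i / 2) (w / 2) := by
  simp only [Pre, Nat.testBit_div_two]
  constructor
  · intro h
    exact ⟨by simpa [Nat.testBit_zero] using h 0, fun t => h (t + 1)⟩
  · rintro ⟨h0, h⟩ (_ | t)
    · simpa [Nat.testBit_zero] using h0
    · exact h t

/-- Lucas's theorem for `p = 2`. -/
lemma choose_cast_zmod_two (w i : ℕ) : (w.choose i : ZMod 2) = if Pre i w then 1 else 0 := by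
  induction w using Nat.strong_induction_on generalizing i with
  | _ w ih =>
    rcases Nat.eq_zero_or_pos w with rfl | hw
    · rcases i with _ | i <;> simp [pre_zero_right_iff]
    have lucas : (w.choose i : ZMod 2) = (w % 2).choose (i % 2) * (w / 2).choose (i / 2) := by
      exact_mod_cast (ZMod.natCast_eq_natCast_iff _ _ _).mpr
        Choose.choose_modEq_choose_mod_mul_choose_div_nat
    rw [lucas, pre_iff_mod_two_and_div_two, ih _ (Nat.div_lt_self hw one_lt_two)]
    rcases Nat.mod_two_eq_zero_or_one i with hi | hi <;>
      rcases Nat.mod_two_eq_zero_or_one w with hw | hw <;> simp [hi, hw]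

lemma sum_range_choose_mul_choose {i N : ℕ} (hi : i ≤ N) (k : ℕ) :
    ∑ j ∈ Finset.range (N + 1), i.choose j * j.choose k = i.choose k * 2 ^ (i - k) := by
  rw [← Finset.sum_subset (Finset.range_subset_range.mpr (by omega : i + 1 ≤ N + 1))
    fun j _ hj => by rw [Nat.choose_eq_zero_of_lt (by simpa using hj), zero_mul]]
  rcases lt_or_ge i k with hik | hki
  · rw [Nat.choose_eq_zero_of_lt hik, zero_mul]
    exact Finset.sum_eq_zero fun j hj =>
      by rw [Nat.choose_eq_zero_of_lt (by simp at hj; omega : j < k), mul_zero]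
  obtain ⟨m, rfl⟩ := Nat.exists_eq_add_of_le hki
  rw [add_assoc, Finset.sum_range_add, Finset.sum_eq_zero fun j hj =>
      by rw [Nat.choose_eq_zero_of_lt (Finset.mem_range.mp hj), mul_zero], zero_add,
    Nat.add_sub_cancel_left, ← Nat.sum_range_choose, Finset.mul_sum]
  refine Finset.sum_congr rfl fun l _ => ?_
  rw [Nat.choose_mul le_self_add, Nat.add_sub_cancel_left, Nat.add_sub_cancel_left]

lemma sum_choose_mul_sum_choose_mul_zmod_two {i N : ℕ} (hi : i ≤ N) (g : ℕ → ZMod 2) :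
    ∑ j ∈ Finset.range (N + 1), (i.choose j : ZMod 2) *
      ∑ k ∈ Finset.range (N + 1), (j.choose k : ZMod 2) * g k = g i := by
  simp_rw [Finset.mul_sum, ← mul_assoc]
  rw [Finset.sum_comm]
  simp_rw [← Finset.sum_mul, ← Nat.cast_mul, ← Nat.cast_sum, sum_range_choose_mul_choose hi]
  rw [Finset.sum_eq_single i]
  · simp
  · intro k _ hki
    rcases lt_or_gt_of_ne hki with hlt | hgt
    · rw [Nat.cast_mul, Nat.cast_pow, (by decide : ((2 : ℕ) : ZMod 2) = 0),
        zero_pow (by omega), mul_zero, zero_mul]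
    · rw [Nat.choose_eq_zero_of_lt hgt]
      simp
  · intro h
    exact absurd (Finset.mem_range.mpr (by omega)) h

lemma sum_filter_pre_eq_sum_choose_mul (s : Finset ℕ) (i : ℕ) (g : ℕ → ZMod 2) :
    ∑ j ∈ s.filter (Pre · i), g j = ∑ j ∈ s, (i.choose j : ZMod 2) * g j := by
  rw [Finset.sum_filter]
  refine Finset.sum_congr rfl fun j _ => ?_
  rw [choose_cast_zmod_two]
  split_ifs <;> simp

lemma sigmaF_eq_choose_wtv {n : ℕ} (i : ℕ) (x : Fin n → ZMod 2) :
    sigmaF n i x = ((wtv x).choose i : ZMod 2) := by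
  have hx : ∀ s : Finset (Fin n), ∏ j ∈ s, x j = if ∀ j ∈ s, x j = 1 then 1 else 0 := by
    have h01 : ∀ a : ZMod 2, a = if a = 1 then 1 else 0 := by decide
    intro s
    rw [Finset.prod_congr rfl fun j _ => h01 (x j), Finset.prod_boole]
    congr
  simp only [sigmaF, hx, Finset.sum_boole, wtv]
  congr 2
  rw [← Finset.card_powersetCard]
  congr 1
  ext s
  simp [Finset.subset_iff, and_comm]

lemma exists_wtv_eq {n w : ℕ} (hw : w ≤ n) : ∃ x : Fin n → ZMod 2, wtv x = w := by
  refine ⟨fun j => if (j : ℕ) < w then 1 else 0, ?_⟩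
  simp [wtv, Fin.card_filter_val_lt, hw]

theorem stmt3_general {n : ℕ} (f : (Fin n → ZMod 2) → ZMod 2)
    (v lam : ℕ → ZMod 2)
    (hv : ∀ x, f x = v (wtv x))
    (hlam : ∀ x, f x = ∑ i ∈ Finset.range (n+1), lam i * sigmaF n i x) :
    ∀ i ≤ n,
      lam i = ∑ j ∈ (Finset.range (n+1)).filter (fun j => Pre j i), v j ∧
      v i = ∑ j ∈ (Finset.range (n+1)).filter (fun j => Pre j i), lam j := by
  have v_eq : ∀ w ≤ n, v w = ∑ j ∈ Finset.range (n + 1), (w.choose j : ZMod 2) * lam j := by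
    intro w hw
    obtain ⟨x, rfl⟩ := exists_wtv_eq hw
    simp_rw [← hv, hlam, sigmaF_eq_choose_wtv, mul_comm]
  intro i hi
  simp_rw [sum_filter_pre_eq_sum_choose_mul]
  refine ⟨?_, v_eq i hi⟩
  rw [← sum_choose_mul_sum_choose_mul_zmod_two hi lam]
  refine Finset.sum_congr rfl fun j hj => ?_
  rw [v_eq j (Nat.lt_succ_iff.mp (Finset.mem_range.mp hj))]

theorem stmt3 {n : ℕ} (f : (Fin n → ZMod 2) → ZMod 2) (hf : SymmF f)
    (v lam : ℕ → ZMod 2)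
    (hv : ∀ x, f x = v (wtv x))
    (hlam : ∀ x, f x = ∑ i ∈ Finset.range (n+1), lam i * sigmaF n i x) :
    ∀ i ≤ n,
      lam i = ∑ j ∈ (Finset.range (n+1)).filter (fun j => Pre j i), v j ∧
      v i = ∑ j ∈ (Finset.range (n+1)).filter (fun j => Pre j i), lam j :=
  stmt3_general f v lam hv hlam
end

section
/- Let f be a symmetric Boolean function on n variables with algebraic degree less than 2^ℓ for some ℓ ≥ 1. Then its simplified value vector is periodic with period 2^ℓ: v_f(i) = v_f(i + 2^ℓ) for all 0 ≤ i ≤ n − 2^ℓ. -/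
open scoped Classical

lemma key_sum {n : ℕ} (P : MvPolynomial (Fin n) (ZMod 2))
    (T : Finset (Fin n)) (hd : P.totalDegree < T.card)
    (c : Fin n → ZMod 2) (hc : ∀ j ∈ T, c j = 0) :
    ∑ S ∈ T.powerset, MvPolynomial.eval (fun j => if j ∈ S then 1 else c j) P = 0 := by
  simp only [MvPolynomial.eval_eq]
  rw [Finset.sum_comm]
  refine Finset.sum_eq_zero fun d hdP => ?_
  set U : Finset (Fin n) := d.support ∩ T with hU
  have hUT : U ⊆ T := Finset.inter_subset_right
  have hUcard : U.card < T.card := by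
    have h1 : U.card ≤ d.support.card := Finset.card_le_card Finset.inter_subset_left
    have h2 : d.support.card ≤ d.sum fun _ e => e := by
      rw [Finsupp.sum, Finset.card_eq_sum_ones]
      exact Finset.sum_le_sum fun i hi => Nat.one_le_iff_ne_zero.2 (Finsupp.mem_support_iff.1 hi)
    have h3 : (d.sum fun _ e => e) ≤ P.totalDegree := MvPolynomial.le_totalDegree hdP
    omega
  have hprod : ∀ S ∈ T.powerset,
      (P.coeff d * ∏ i ∈ d.support, (if i ∈ S then (1:ZMod 2) else c i) ^ d i)
      = (P.coeff d * ∏ i ∈ d.support \ U, c i ^ d i) * (if U ⊆ S then 1 else 0) := by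
    intro S hS
    rw [Finset.mem_powerset] at hS
    have e1 : ∀ i ∈ d.support \ U, (if i ∈ S then (1:ZMod 2) else c i) ^ d i = c i ^ d i := by
      intro i hi
      rw [Finset.mem_sdiff, hU, Finset.mem_inter] at hi
      have hiS : i ∉ S := fun h => hi.2 ⟨hi.1, hS h⟩
      rw [if_neg hiS]
    have e2 : (∏ i ∈ U, (if i ∈ S then (1:ZMod 2) else c i) ^ d i) = if U ⊆ S then 1 else 0 := by
      by_cases h : U ⊆ S
      · rw [if_pos h]
        exact Finset.prod_eq_one fun i hi => by rw [if_pos (h hi), one_pow]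
      · rw [if_neg h]
        obtain ⟨i, hiU, hiS⟩ := Finset.not_subset.1 h
        refine Finset.prod_eq_zero hiU ?_
        have hdi : d i ≠ 0 := Finsupp.mem_support_iff.1 (Finset.mem_inter.1 hiU).1
        rw [if_neg hiS, hc i (hUT hiU), zero_pow hdi]
    rw [← Finset.prod_sdiff (Finset.inter_subset_left : U ⊆ d.support),
      Finset.prod_congr rfl e1, e2, mul_assoc]
  rw [Finset.sum_congr rfl hprod, ← Finset.mul_sum, Finset.sum_boole,
    ← Finset.Icc_eq_filter_powerset, Finset.card_Icc_finset hUT]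
  have h2 : ((2 ^ (T.card - U.card) : ℕ) : ZMod 2) = 0 := by
    push_cast
    rw [show ((2 : ZMod 2) = 0) by decide, zero_pow (by omega)]
  rw [h2, mul_zero]

lemma exists_repr {n : ℕ} (f : (Fin n → ZMod 2) → ZMod 2) :
    ∃ P : MvPolynomial (Fin n) (ZMod 2), ∀ x, MvPolynomial.eval x P = f x := by
  classical
  refine ⟨∑ a : Fin n → ZMod 2, MvPolynomial.C (f a) *
      ∏ j, (MvPolynomial.X j + MvPolynomial.C (a j) + 1), fun x => ?_⟩
  rw [map_sum]
  have h : ∀ a : Fin n → ZMod 2,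
      MvPolynomial.eval x (MvPolynomial.C (f a) *
        ∏ j, (MvPolynomial.X j + MvPolynomial.C (a j) + 1))
      = if a = x then f a else 0 := by
    intro a
    rw [map_mul, map_prod, MvPolynomial.eval_C]
    simp only [map_add, MvPolynomial.eval_X, MvPolynomial.eval_C, map_one]
    by_cases h : a = x
    · rw [if_pos h, h]
      have h1 : ∀ j : Fin n, x j + x j + 1 = (1 : ZMod 2) := fun j => by
        rw [CharTwo.add_self_eq_zero, zero_add]
      rw [Finset.prod_congr rfl fun j _ => h1 j, Finset.prod_const_one, mul_one]
    · rw [if_neg h]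
      obtain ⟨j, hj⟩ := Function.ne_iff.1 h
      rw [Finset.prod_eq_zero (Finset.mem_univ j), mul_zero]
      revert hj
      generalize x j = u; generalize a j = w
      revert u w; decide
  rw [Finset.sum_congr rfl fun a _ => h a]
  simp

theorem stmt4 {n : ℕ} (l : ℕ) (hl : 1 ≤ l)
    (f : (Fin n → ZMod 2) → ZMod 2) (hf : SymmF f)
    (v : ℕ → ZMod 2) (hv : ∀ x, f x = v (wtv x))
    (hdeg : funcDeg f < 2 ^ l) :
    ∀ i, i + 2 ^ l ≤ n → v i = v (i + 2 ^ l) := by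
  intro i hi
  -- obtain a representing polynomial of degree < 2^l
  obtain ⟨P0, hP0⟩ := exists_repr f
  have hne : {d | ∃ P : MvPolynomial (Fin n) (ZMod 2), P.totalDegree ≤ d ∧
      ∀ x, MvPolynomial.eval x P = f x}.Nonempty := ⟨P0.totalDegree, P0, le_rfl, hP0⟩
  obtain ⟨P, hPd, hP⟩ := Nat.sInf_mem hne
  have hPd' : P.totalDegree < 2 ^ l := lt_of_le_of_lt hPd hdeg
  -- the window of coordinates [i, i + 2^l)
  have hT : ∀ m ∈ Finset.Ico i (i + 2 ^ l), m < n := fun m hm =>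
    lt_of_lt_of_le (Finset.mem_Ico.1 hm).2 hi
  set T : Finset (Fin n) := (Finset.Ico i (i + 2 ^ l)).attachFin hT with hTdef
  have hTcard : T.card = 2 ^ l := by
    rw [hTdef, Finset.card_attachFin, Nat.card_Ico]; omega
  set c : Fin n → ZMod 2 := fun j => if (j : ℕ) < i then 1 else 0 with hcdef
  have hc : ∀ j ∈ T, c j = 0 := by
    intro j hj
    have := (Finset.mem_Ico.1 ((Finset.mem_attachFin hT).1 hj)).1
    simp only [hcdef]
    rw [if_neg (by omega)]
  have key := key_sum P T (by rw [hTcard]; exact hPd') c hc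
  -- compute the weight of each evaluation point
  have hLow : ∀ m ∈ Finset.range i, m < n := fun m hm => by
    have := Finset.mem_range.1 hm; omega
  have hw : ∀ S ∈ T.powerset,
      MvPolynomial.eval (fun j => if j ∈ S then 1 else c j) P = v (i + S.card) := by
    intro S hS
    rw [Finset.mem_powerset] at hS
    rw [hP, hv]
    congr 1
    have hfil : (Finset.univ.filter (fun j => (if j ∈ S then 1 else c j) = (1 : ZMod 2)))
        = S ∪ (Finset.range i).attachFin hLow := by
      ext j
      simp only [Finset.mem_filter, Finset.mem_univ, true_and, Finset.mem_union,
        Finset.mem_attachFin, Finset.mem_range]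
      by_cases hjS : j ∈ S
      · simp [hjS]
      · simp only [if_neg hjS, hjS, false_or, hcdef]
        by_cases hji : (j : ℕ) < i
        · simp [hji]
        · simp [hji]
    have hdisj : Disjoint S ((Finset.range i).attachFin hLow) := by
      rw [Finset.disjoint_left]
      intro j hjS hjL
      have h1 := (Finset.mem_Ico.1 ((Finset.mem_attachFin hT).1 (hS hjS))).1
      have h2 := Finset.mem_range.1 ((Finset.mem_attachFin hLow).1 hjL)
      omega
    rw [wtv, hfil, Finset.card_union_of_disjoint hdisj, Finset.card_attachFin,
      Finset.card_range, add_comm]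
  rw [Finset.sum_congr rfl hw] at key
  rw [Finset.sum_powerset_apply_card (fun m => v (i + m)), hTcard] at key
  -- only the first and last binomial coefficients survive mod 2
  have hz : ∀ m ∈ Finset.range (2 ^ l + 1), m ∉ ({0, 2 ^ l} : Finset ℕ) →
      (2 ^ l).choose m • v (i + m) = 0 := by
    intro m hm hm'
    simp only [Finset.mem_insert, Finset.mem_singleton, not_or] at hm'
    have hdvd : 2 ∣ (2 ^ l).choose m := Nat.Prime.dvd_choose_pow Nat.prime_two hm'.1 hm'.2
    rw [nsmul_eq_mul]
    obtain ⟨k, hk⟩ := hdvd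
    rw [hk]
    push_cast
    rw [show ((2 : ZMod 2) = 0) by decide, zero_mul, zero_mul]
  have hsub : ({0, 2 ^ l} : Finset ℕ) ⊆ Finset.range (2 ^ l + 1) := by
    intro m hm
    simp only [Finset.mem_insert, Finset.mem_singleton] at hm
    rw [Finset.mem_range]; omega
  rw [← Finset.sum_subset hsub (fun m hm hm' => hz m hm hm')] at key
  have hpos : (0 : ℕ) ≠ 2 ^ l := by positivity
  rw [Finset.sum_pair hpos] at key
  simp only [Nat.choose_self, Nat.choose_zero_right, one_smul, add_zero] at key
  -- conclude in characteristic two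
  have := eq_neg_of_add_eq_zero_left key
  rwa [CharTwo.neg_eq] at this
end

section
/- Let n = 2k and let G_n be the n-variable majority function, i.e., the symmetric Boolean function with v(i) = 0 for i ≤ k and v(i) = 1 for i > k. Then the algebraic immunity of G_n equals k. -/
/-!
Over `𝔽₂`, a polynomial of total degree `d` sums to `0` over the indicator vectors of an
interval `[A, B]` of subsets of `Fin n` whenever `|A| + d < |B|`: a monomial with support `s`
is `1` exactly on `[A ∪ s, B]`, which has `2 ^ (|B| - |A ∪ s|)` elements, an even number.
Applied below a minimal, resp. above a maximal, nonzero point of a nonzero function `g`, this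
shows that `g` is nonzero at a point of weight `≤ deg g` and at one of weight `≥ n - deg g`.
An annihilator of the threshold function `[wt x > t]` vanishes above weight `t`, and one of its
complement vanishes at weight `≤ t`; hence `AI ≥ min (t + 1) (n - t)`, while
`∏_{i ∈ K} (1 + x_i)` with `|K| = n - t` annihilates it with degree `≤ n - t`.
For `n = 2k` and `t = k` both bounds are `k`.
-/

open scoped Classical

open MvPolynomial

lemma card_support_le_totalDegree {R σ : Type*} [CommSemiring R] {P : MvPolynomial σ R}
    {d : σ →₀ ℕ} (hd : d ∈ P.support) : d.support.card ≤ P.totalDegree := by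
  rw [totalDegree_eq, ← Finsupp.toFinset_toMultiset]
  exact (Multiset.toFinset_card_le _).trans
    (Finset.le_sup (f := fun m => Multiset.card (Finsupp.toMultiset m)) hd)

lemma even_card_filter_superset_Icc {α : Type*} [DecidableEq α] (A B C : Finset α)
    (h : (A ∪ C).card < B.card) : Even ((Finset.Icc A B).filter (C ⊆ ·)).card := by
  have hfilter : (Finset.Icc A B).filter (C ⊆ ·) = Finset.Icc (A ∪ C) B := by
    ext T
    simp only [Finset.mem_filter, Finset.mem_Icc, Finset.union_subset_iff]
    tauto
  rw [hfilter]
  by_cases hsub : A ∪ C ⊆ B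
  · rw [Finset.card_Icc_finset hsub, Nat.even_pow]
    exact ⟨even_two, by omega⟩
  · simp [Finset.Icc_eq_empty hsub]

lemma mul_add_one_self_eq_zero {α : Type*} (f : α → ZMod 2) : f * (f + 1) = 0 := by
  funext x
  simp only [Pi.mul_apply, Pi.add_apply, Pi.one_apply, Pi.zero_apply]
  generalize f x = a
  revert a
  decide

section

variable {n : ℕ}

noncomputable def indicatorVec (T : Finset (Fin n)) : Fin n → ZMod 2 :=
  fun i => if i ∈ T then 1 else 0

lemma wtv_indicatorVec (T : Finset (Fin n)) : wtv (indicatorVec T) = T.card := by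
  simp [wtv, indicatorVec]

lemma indicatorVec_filter_eq_one (x : Fin n → ZMod 2) :
    indicatorVec (Finset.univ.filter fun i => x i = 1) = x := by
  funext i
  simp only [indicatorVec, Finset.mem_filter, Finset.mem_univ, true_and]
  generalize x i = a
  revert a
  decide

lemma eval_indicatorVec (P : MvPolynomial (Fin n) (ZMod 2)) (T : Finset (Fin n)) :
    eval (indicatorVec T) P = ∑ d ∈ P.support, if d.support ⊆ T then P.coeff d else 0 := by
  rw [eval_eq]
  refine Finset.sum_congr rfl fun d _ => ?_
  have hpow : ∀ i ∈ d.support, indicatorVec T i ^ d i = if i ∈ T then 1 else 0 := by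
    intro i hi
    by_cases hiT : i ∈ T <;> simp [indicatorVec, hiT, zero_pow (Finsupp.mem_support_iff.mp hi)]
  rw [Finset.prod_congr rfl hpow, Finset.prod_boole, mul_ite, mul_one, mul_zero]
  rfl

lemma sum_eval_indicatorVec_Icc_eq_zero (P : MvPolynomial (Fin n) (ZMod 2))
    {A B : Finset (Fin n)} (h : A.card + P.totalDegree < B.card) :
    ∑ T ∈ Finset.Icc A B, eval (indicatorVec T) P = 0 := by
  simp_rw [eval_indicatorVec]
  rw [Finset.sum_comm]
  refine Finset.sum_eq_zero fun d hd => ?_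
  have hcard : (A ∪ d.support).card < B.card :=
    (Finset.card_union_le A d.support).trans_lt
      (by have := card_support_le_totalDegree hd; omega)
  rw [← Finset.sum_filter, Finset.sum_const, nsmul_eq_mul,
    (ZMod.natCast_eq_zero_iff_even).2 (even_card_filter_superset_Icc A B _ hcard), zero_mul]

lemma eval_indicatorVec_eq_zero_of_Icc {P : MvPolynomial (Fin n) (ZMod 2)}
    {A B S : Finset (Fin n)} (h : A.card + P.totalDegree < B.card) (hS : S ∈ Finset.Icc A B)
    (hvan : ∀ T ∈ Finset.Icc A B, T ≠ S → eval (indicatorVec T) P = 0) :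
    eval (indicatorVec S) P = 0 := by
  rw [← sum_eval_indicatorVec_Icc_eq_zero P h, Finset.sum_eq_single_of_mem S hS hvan]

lemma exists_card_le_totalDegree_of_eval_ne_zero {P : MvPolynomial (Fin n) (ZMod 2)}
    {x : Fin n → ZMod 2} (hx : eval x P ≠ 0) :
    ∃ S : Finset (Fin n), eval (indicatorVec S) P ≠ 0 ∧ S.card ≤ P.totalDegree := by
  have hne : (Finset.univ.filter fun S => eval (indicatorVec S) P ≠ 0).Nonempty :=
    ⟨Finset.univ.filter (x · = 1), by simpa [indicatorVec_filter_eq_one] using hx⟩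
  obtain ⟨S, hS, hmin⟩ := Finset.exists_min_image _ Finset.card hne
  rw [Finset.mem_filter] at hS
  refine ⟨S, hS.2, not_lt.1 fun hlt => hS.2 ?_⟩
  refine eval_indicatorVec_eq_zero_of_Icc (A := ∅) (by simpa using hlt)
    (Finset.mem_Icc.2 ⟨Finset.empty_subset S, le_rfl⟩) fun T hT hTS => ?_
  by_contra hT0
  exact hTS
    (Finset.eq_of_subset_of_card_le (Finset.mem_Icc.1 hT).2 (hmin T (by simpa using hT0)))

lemma exists_le_card_add_totalDegree_of_eval_ne_zero {P : MvPolynomial (Fin n) (ZMod 2)}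
    {x : Fin n → ZMod 2} (hx : eval x P ≠ 0) :
    ∃ S : Finset (Fin n), eval (indicatorVec S) P ≠ 0 ∧ n ≤ S.card + P.totalDegree := by
  have hne : (Finset.univ.filter fun S => eval (indicatorVec S) P ≠ 0).Nonempty :=
    ⟨Finset.univ.filter (x · = 1), by simpa [indicatorVec_filter_eq_one] using hx⟩
  obtain ⟨S, hS, hmax⟩ := Finset.exists_max_image _ Finset.card hne
  rw [Finset.mem_filter] at hS
  refine ⟨S, hS.2, not_lt.1 fun hlt => hS.2 ?_⟩
  refine eval_indicatorVec_eq_zero_of_Icc (B := Finset.univ) (by simpa using hlt)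
    (Finset.mem_Icc.2 ⟨le_rfl, Finset.subset_univ S⟩) fun T hT hTS => ?_
  by_contra hT0
  exact hTS
    (Finset.eq_of_subset_of_card_le (Finset.mem_Icc.1 hT).1 (hmax T (by simpa using hT0))).symm

lemma exists_totalDegree_le_funcDeg (g : (Fin n → ZMod 2) → ZMod 2) :
    ∃ P : MvPolynomial (Fin n) (ZMod 2),
      P.totalDegree ≤ funcDeg g ∧ ∀ x, eval x P = g x := by
  have hg : g ∈ (restrictDegree (Fin n) (ZMod 2) (Fintype.card (ZMod 2) - 1)).map
      (evalₗ (ZMod 2) (Fin n)) := by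
    rw [map_restrict_dom_evalₗ]
    exact Submodule.mem_top
  obtain ⟨P, -, hP⟩ := Submodule.mem_map.1 hg
  exact Nat.sInf_mem (s := {d | ∃ P : MvPolynomial (Fin n) (ZMod 2), P.totalDegree ≤ d ∧
    ∀ x, eval x P = g x}) ⟨P.totalDegree, P, le_rfl, fun x => congrFun hP x⟩

lemma funcDeg_le_totalDegree {g : (Fin n → ZMod 2) → ZMod 2} (P : MvPolynomial (Fin n) (ZMod 2))
    (hP : ∀ x, eval x P = g x) : funcDeg g ≤ P.totalDegree :=
  Nat.sInf_le ⟨P, le_rfl, hP⟩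

lemma exists_wtv_le_funcDeg {g : (Fin n → ZMod 2) → ZMod 2} (hg : g ≠ 0) :
    ∃ x, g x ≠ 0 ∧ wtv x ≤ funcDeg g := by
  obtain ⟨P, hdeg, hP⟩ := exists_totalDegree_le_funcDeg g
  obtain ⟨x, hx⟩ := Function.ne_iff.1 hg
  obtain ⟨S, hS, hcard⟩ := exists_card_le_totalDegree_of_eval_ne_zero (P := P) (x := x)
    (by rwa [hP])
  exact ⟨indicatorVec S, by rwa [← hP], by rw [wtv_indicatorVec]; omega⟩

lemma exists_le_wtv_add_funcDeg {g : (Fin n → ZMod 2) → ZMod 2} (hg : g ≠ 0) :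
    ∃ x, g x ≠ 0 ∧ n ≤ wtv x + funcDeg g := by
  obtain ⟨P, hdeg, hP⟩ := exists_totalDegree_le_funcDeg g
  obtain ⟨x, hx⟩ := Function.ne_iff.1 hg
  obtain ⟨S, hS, hcard⟩ := exists_le_card_add_totalDegree_of_eval_ne_zero (P := P) (x := x)
    (by rwa [hP])
  exact ⟨indicatorVec S, by rwa [← hP], by rw [wtv_indicatorVec]; omega⟩

lemma funcDeg_prod_one_add_le (K : Finset (Fin n)) :
    funcDeg (fun x : Fin n → ZMod 2 => ∏ i ∈ K, (1 + x i)) ≤ K.card :=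
  calc funcDeg (fun x : Fin n → ZMod 2 => ∏ i ∈ K, (1 + x i))
      ≤ (∏ i ∈ K, (1 + X i) : MvPolynomial (Fin n) (ZMod 2)).totalDegree :=
        funcDeg_le_totalDegree _ fun x => by simp
    _ ≤ ∑ i ∈ K, (1 + X i : MvPolynomial (Fin n) (ZMod 2)).totalDegree :=
        totalDegree_finsetProd _ _
    _ ≤ ∑ _i ∈ K, 1 :=
        Finset.sum_le_sum fun i _ => (totalDegree_add _ _).trans (by simp)
    _ = K.card := by simp

lemma wtv_add_card_le_of_prod_one_add_ne_zero {K : Finset (Fin n)} {x : Fin n → ZMod 2}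
    (h : ∏ i ∈ K, (1 + x i) ≠ 0) : wtv x + K.card ≤ n := by
  have hsub : Finset.univ.filter (fun i => x i = 1) ⊆ Kᶜ := fun i hi =>
    Finset.mem_compl.2 fun hiK => h (Finset.prod_eq_zero hiK (by
      rw [(Finset.mem_filter.1 hi).2]; decide))
  calc wtv x + K.card ≤ Kᶜ.card + K.card := Nat.add_le_add_right (Finset.card_le_card hsub) _
    _ = n := by rw [add_comm, Finset.card_add_card_compl, Fintype.card_fin]

lemma AI_set_nonempty (f : (Fin n → ZMod 2) → ZMod 2) :
    {d | ∃ g : (Fin n → ZMod 2) → ZMod 2, g ≠ 0 ∧ funcDeg g = d ∧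
      (f * g = 0 ∨ (f + 1) * g = 0)}.Nonempty := by
  by_cases hf : f + 1 = 0
  · refine ⟨_, f, fun h0 => ?_, rfl, Or.inr (by rw [hf, zero_mul])⟩
    simp [h0] at hf
  · exact ⟨_, f + 1, hf, rfl, Or.inl (mul_add_one_self_eq_zero f)⟩

lemma AI_le_funcDeg {f g : (Fin n → ZMod 2) → ZMod 2} (hg : g ≠ 0)
    (hfg : f * g = 0 ∨ (f + 1) * g = 0) : AI f ≤ funcDeg g :=
  Nat.sInf_le ⟨g, hg, rfl, hfg⟩

lemma le_AI {f : (Fin n → ZMod 2) → ZMod 2} {m : ℕ}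
    (h : ∀ g, g ≠ 0 → (f * g = 0 ∨ (f + 1) * g = 0) → m ≤ funcDeg g) : m ≤ AI f :=
  le_csInf (AI_set_nonempty f) fun _ ⟨g, hg, hdeg, hfg⟩ => hdeg ▸ h g hg hfg

lemma min_le_AI_of_threshold (t : ℕ) {G : (Fin n → ZMod 2) → ZMod 2}
    (hG : ∀ x, G x = if wtv x ≤ t then 0 else 1) : min (t + 1) (n - t) ≤ AI G := by
  refine le_AI fun g hg hann => ?_
  rcases hann with hann | hann
  · obtain ⟨x, hx, hwt⟩ := exists_le_wtv_add_funcDeg hg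
    have : wtv x ≤ t := by
      by_contra hlt
      simpa [hG, hlt, hx] using congrFun hann x
    omega
  · obtain ⟨x, hx, hwt⟩ := exists_wtv_le_funcDeg hg
    have : t < wtv x := by
      by_contra hle
      simpa [hG, not_lt.1 hle, hx] using congrFun hann x
    omega

lemma AI_le_of_threshold (t : ℕ) {G : (Fin n → ZMod 2) → ZMod 2}
    (hG : ∀ x, G x = if wtv x ≤ t then 0 else 1) : AI G ≤ n - t := by
  obtain ⟨K, -, hK⟩ := Finset.exists_subset_card_eq (s := (Finset.univ : Finset (Fin n)))
    (n := n - t) (by simp)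
  have hann : G * (fun x => ∏ i ∈ K, (1 + x i)) = 0 := by
    funext x
    by_cases hx : ∏ i ∈ K, (1 + x i) = 0
    · simp [hx]
    · have := wtv_add_card_le_of_prod_one_add_ne_zero hx
      simp [hG, show wtv x ≤ t by omega]
  calc AI G ≤ funcDeg (fun x : Fin n → ZMod 2 => ∏ i ∈ K, (1 + x i)) :=
        AI_le_funcDeg (Function.ne_iff.2 ⟨0, by simp⟩) (Or.inl hann)
    _ ≤ K.card := funcDeg_prod_one_add_le K
    _ = n - t := hK

end

theorem stmt5 (k : ℕ) {n : ℕ} (hn : n = 2 * k)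
    (G : (Fin n → ZMod 2) → ZMod 2)
    (hG : ∀ x, G x = if wtv x ≤ k then 0 else 1) :
    AI G = k := by
  have hupper := AI_le_of_threshold k hG
  have hlower := min_le_AI_of_threshold k hG
  omega
end

section
/- For k a positive integer and n = 2k, define ε_i ∈ F₂^k for each nonnegative integer i by (ε_i)_j = 1 iff j ⪯ i (for 0 ≤ j ≤ k−1). Then {ε_{k+1}, ε_{k+2}, …, ε_{2k}} is a basis of F₂^k. -/
open scoped Classical

/-- The vector `ε_i ∈ F₂^k` whose `j`-th coordinate is `1` iff `j ⪯ i`. -/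
noncomputable def eps (k : ℕ) (i : ℕ) : Fin k → ZMod 2 :=
  fun j => if Pre j.val i then 1 else 0

lemma pre_iff (a b : ℕ) :
    Pre a b ↔ ((a % 2 = 1 → b % 2 = 1) ∧ Pre (a / 2) (b / 2)) := by
  constructor
  · intro h
    refine ⟨?_, fun t ht => ?_⟩
    · intro ha
      have h0 : a.testBit 0 = true := by simp [Nat.testBit_zero, ha]
      have := h 0 h0
      simpa [Nat.testBit_zero] using this
    · rw [Nat.testBit_div_two] at ht ⊢
      exact h (t + 1) ht
  · rintro ⟨h0, h1⟩ t ht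
    cases t with
    | zero =>
      simp only [Nat.testBit_zero, decide_eq_true_eq] at ht ⊢
      exact h0 ht
    | succ t =>
      rw [← Nat.testBit_div_two] at ht ⊢
      exact h1 t ht

lemma pre_zero_iff (a : ℕ) : Pre a 0 ↔ a = 0 := by
  constructor
  · intro h
    refine Nat.eq_of_testBit_eq fun i => ?_
    rw [Nat.zero_testBit]
    by_contra hne
    have hb : a.testBit i = true := by
      cases ha : a.testBit i
      · simp [ha] at hne
      · rfl
    have := h i hb
    simp [Nat.zero_testBit] at this
  · rintro rfl t ht
    simpa using ht

/-- Lucas' theorem mod 2. -/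
lemma lucas_two : ∀ n k : ℕ, ((n.choose k : ZMod 2)) = if Pre k n then 1 else 0 := by
  intro n
  induction n using Nat.strong_induction_on with
  | _ n ih =>
    intro k
    rcases Nat.eq_zero_or_pos n with rfl | hn
    · rcases Nat.eq_zero_or_pos k with rfl | hk
      · simp [pre_zero_iff]
      · rw [Nat.choose_eq_zero_of_lt hk]
        rw [if_neg]
        · simp
        · rw [pre_zero_iff]; omega
    · have hmod : (n.choose k : ZMod 2)
          = ((n % 2).choose (k % 2) * ((n / 2).choose (k / 2)) : ℕ) := by
        have := @Choose.choose_modEq_choose_mod_mul_choose_div_nat n k 2 ⟨Nat.prime_two⟩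
        exact_mod_cast (ZMod.natCast_eq_natCast_iff _ _ _).mpr this
      rw [hmod]
      push_cast
      rw [pre_iff k n, ih (n / 2) (by omega) (k / 2)]
      have h2 : n % 2 = 0 ∨ n % 2 = 1 := by omega
      have h2' : k % 2 = 0 ∨ k % 2 = 1 := by omega
      rcases h2 with h | h <;> rcases h2' with h' | h' <;>
        simp [h, h'] <;> split_ifs <;> simp_all

section Matrices

variable (k : ℕ)

/-- The matrix of the family `ε_{k+1+i}`. -/
noncomputable def Mmat : Matrix (Fin k) (Fin k) (ZMod 2) :=
  fun i j => ((k + 1 + (i : ℕ)).choose j : ZMod 2)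

noncomputable def Pmat : Matrix (Fin k) (Fin k) (ZMod 2) :=
  fun i l => (((i : ℕ)).choose l : ZMod 2)

noncomputable def Qmat : Matrix (Fin k) (Fin k) (ZMod 2) :=
  fun l j => if (l : ℕ) ≤ (j : ℕ) then (((k + 1)).choose ((j : ℕ) - (l : ℕ)) : ZMod 2) else 0

lemma Mmat_eq_mul : Mmat k = Pmat k * Qmat k := by
  ext i j
  rw [Matrix.mul_apply]
  set g : ℕ → ZMod 2 := fun l =>
    if l ≤ (j : ℕ) then (((i : ℕ).choose l * (k + 1).choose ((j : ℕ) - l) : ℕ) : ZMod 2) else 0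
    with hg
  have hsub : ∑ l ∈ Finset.range k, g l = ∑ l ∈ Finset.range ((j : ℕ) + 1), g l := by
    refine (Finset.sum_subset ?_ ?_).symm
    · intro l hl
      simp only [Finset.mem_range] at hl ⊢
      exact lt_of_lt_of_le hl j.is_lt
    · intro l _ hl
      simp only [Finset.mem_range] at hl
      rw [hg]
      simp only []
      rw [if_neg (by omega)]
  have h3 : ∑ l : Fin k, Pmat k i l * Qmat k l j = ∑ l ∈ Finset.range ((j : ℕ) + 1), g l := by
    rw [← hsub, ← Fin.sum_univ_eq_sum_range g k]
    refine Finset.sum_congr rfl fun l _ => ?_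
    simp only [hg, Pmat, Qmat]
    split_ifs with h
    · push_cast; ring
    · rfl
  rw [h3]
  have hvand : (k + 1 + (i : ℕ)).choose j
      = ∑ l ∈ Finset.range ((j : ℕ) + 1), ((i : ℕ)).choose l * (k + 1).choose ((j : ℕ) - l) := by
    rw [add_comm (k + 1) (i : ℕ), Nat.add_choose_eq]
    rw [Finset.Nat.sum_antidiagonal_eq_sum_range_succ
      (fun a b => ((i : ℕ)).choose a * (k + 1).choose b)]
  show ((k + 1 + (i : ℕ)).choose j : ZMod 2) = _
  rw [hvand]
  push_cast
  refine Finset.sum_congr rfl fun l hl => ?_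
  simp only [Finset.mem_range] at hl
  rw [hg]
  simp only []
  rw [if_pos (by omega)]
  push_cast
  ring

lemma det_Pmat : (Pmat k).det = 1 := by
  rw [Matrix.det_of_lowerTriangular (Pmat k) ?_]
  · simp [Pmat]
  · intro i j hij
    simp only [OrderDual.toDual_lt_toDual] at hij
    simp only [Pmat]
    rw [Nat.choose_eq_zero_of_lt (by exact_mod_cast hij)]
    simp

lemma det_Qmat : (Qmat k).det = 1 := by
  rw [Matrix.det_of_upperTriangular ?_]
  · simp [Qmat]
  · intro i j hij
    simp only [id_eq] at hij
    simp only [Qmat]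
    rw [if_neg]
    exact fun h => absurd (Fin.le_def.mpr h) (not_le.mpr hij)

lemma det_Mmat : (Mmat k).det = 1 := by
  rw [Mmat_eq_mul, Matrix.det_mul, det_Pmat, det_Qmat, one_mul]

lemma eps_eq_row (i : Fin k) : eps k (k + 1 + i.val) = Mmat k i := by
  funext j
  show (if Pre j.val (k + 1 + i.val) then (1 : ZMod 2) else 0) = _
  rw [← lucas_two]
  rfl

end Matrices

theorem stmt9 (k : ℕ) (hk : 0 < k) :
    LinearIndependent (ZMod 2) (fun i : Fin k => eps k (k + 1 + i.val)) ∧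
    Submodule.span (ZMod 2) (Set.range (fun i : Fin k => eps k (k + 1 + i.val))) = ⊤ := by
  have hdet : IsUnit (Mmat k).det := by rw [det_Mmat]; exact isUnit_one
  have hMN : Mmat k * (Mmat k)⁻¹ = 1 := Matrix.mul_nonsing_inv _ hdet
  have hNM : (Mmat k)⁻¹ * Mmat k = 1 := Matrix.nonsing_inv_mul _ hdet
  have key : ∀ c : Fin k → ZMod 2,
      (∑ i, c i • eps k (k + 1 + i.val)) = Matrix.vecMul c (Mmat k) := by
    intro c
    funext j
    rw [Matrix.vecMul, Finset.sum_apply]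
    simp only [Pi.smul_apply, eps_eq_row, dotProduct, smul_eq_mul]
  constructor
  · rw [Fintype.linearIndependent_iff]
    intro c hc
    have h0 : Matrix.vecMul c (Mmat k) = 0 := by rw [← key]; exact hc
    have : c = 0 := by
      calc c = Matrix.vecMul c (Mmat k * (Mmat k)⁻¹) := by rw [hMN, Matrix.vecMul_one]
        _ = Matrix.vecMul (Matrix.vecMul c (Mmat k)) (Mmat k)⁻¹ := by
            rw [Matrix.vecMul_vecMul]
        _ = 0 := by rw [h0, Matrix.zero_vecMul]
    intro i
    exact congrFun this i
  · rw [eq_top_iff]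
    intro x _
    rw [Submodule.mem_span_range_iff_exists_fun]
    refine ⟨Matrix.vecMul x (Mmat k)⁻¹, ?_⟩
    rw [key]
    rw [Matrix.vecMul_vecMul, hNM, Matrix.vecMul_one]
end
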